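/- arXiv:1307.8403 — 4 statements merged into one kernel-verified Lean document; each statement's English description precedes it below -/
import Mathlib

section
/- Let n ≥ 2 and j ∈ {2,…,n−1}. Among the (n−1)! permutations σ of {1,…,n} with σ(1) = j+1, the number of those for which exactly k indices i ∈ {j+1,…,n} satisfy σ(i) ≤ j equals (n−1)! · C(j,k)·C(n−j−1, n−j−k)/C(n−1, n−j); equivalently, this count equals C(j,k)·C(n−j−1, n−j−k)·(j−1)!·(n−j)!. (Consequently, conditional on the partitioning index I_n = j, the number T_n of key exchanges in the first partitioning step of Hoare's Quickselect is hypergeometrically Hyp(n−1; j, n−j) distributed.) -/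
/-
Fixing `σ 0 = j`, the rest of `σ` is a bijection `e` from the positions `1, …, n-1` onto the
values other than `j`. Let `T` be the positions `≥ j` (there are `n - j` of them) and `S` the
values `< j` (there are `j`). Such an `e` sends exactly `k` points of `T` into `S` iff its image
`W = e(T)` is an `(n-j)`-set meeting `S` in `k` points, and there are `C(j, k) · C(n-j-1, n-j-k)`
such `W`. Each `W` is hit by exactly `(n-j)! · (j-1)!` bijections, namely a bijection `T ≃ W`
glued to a bijection `Tᶜ ≃ Wᶜ`.
-/

open Finset

section

variable {α β : Type*}

theorem map_equiv_eq_iff (T : Finset α) (W : Finset β) (e : α ≃ β) :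
    T.map e.toEmbedding = W ↔ ∀ x, e x ∈ W ↔ x ∈ T := by
  constructor
  · rintro rfl x; simp
  · intro h; ext y; simpa using (h (e.symm y)).symm

variable [DecidableEq β]

theorem union_inter_and_union_sdiff {A B S : Finset β} (hAS : A ⊆ S) (hBS : Disjoint B S) :
    (A ∪ B) ∩ S = A ∧ (A ∪ B) \ S = B := by
  rw [union_inter_distrib_right, inter_eq_left.2 hAS, disjoint_iff_inter_eq_empty.1 hBS,
    union_sdiff_distrib, sdiff_eq_empty_iff_subset.2 hAS, hBS.sdiff_eq_left]
  simp

theorem card_map_inter_eq_card_filter (T : Finset α) (S : Finset β) (e : α ≃ β) :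
    #(T.map e.toEmbedding ∩ S) = #{i ∈ T | e i ∈ S} := by
  rw [← filter_mem_eq_inter, filter_map, card_map]
  rfl

def equivFinSuccOfApplyZero {N : ℕ} (b : β) :
    {σ : Fin (N + 1) ≃ β // σ 0 = b} ≃ (Fin N ≃ {y // y ≠ b}) :=
  (Equiv.subtypeEquiv ((finSuccEquiv N).equivCongr (Equiv.refl β)) fun σ => by simp).trans
    (Equiv.optionSubtype b)

@[simp]
theorem equivFinSuccOfApplyZero_apply_coe {N : ℕ} (b : β)
    (σ : {σ : Fin (N + 1) ≃ β // σ 0 = b}) (i : Fin N) :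
    (equivFinSuccOfApplyZero b σ i : β) = σ.1 i.succ := by
  simp [equivFinSuccOfApplyZero]

variable [DecidableEq α]

def equivOfMemIffEquivProd (T : Finset α) (W : Finset β) :
    {e : α ≃ β // ∀ x, e x ∈ W ↔ x ∈ T} ≃
      ({x // x ∈ T} ≃ {y // y ∈ W}) × ({x // x ∉ T} ≃ {y // y ∉ W}) where
  toFun e :=
    (e.1.subtypeEquiv fun x => (e.2 x).symm, e.1.subtypeEquiv fun x => not_congr (e.2 x).symm)
  invFun fg :=
    ⟨(Equiv.sumCompl _).symm.trans ((fg.1.sumCongr fg.2).trans (Equiv.sumCompl _)), fun x => by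
      by_cases hx : x ∈ T
      · simp [hx, Equiv.sumCompl_symm_apply_of_pos]
      · simpa [hx, Equiv.sumCompl_symm_apply_of_neg] using (fg.2 ⟨x, hx⟩).2⟩
  left_inv e := by
    ext x
    by_cases hx : x ∈ T <;>
      simp [hx, Equiv.sumCompl_symm_apply_of_pos, Equiv.sumCompl_symm_apply_of_neg]
  right_inv fg := by
    ext <;> simp [Equiv.sumCompl_symm_apply_of_pos]

variable [Fintype α] [Fintype β]

theorem card_equiv_filter_map_eq (hαβ : Fintype.card α = Fintype.card β) (T : Finset α)
    (W : Finset β) (hW : #W = #T) :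
    #{e : α ≃ β | T.map e.toEmbedding = W} = (#T).factorial * (#Tᶜ).factorial := by
  simp_rw [map_equiv_eq_iff]
  rw [← Fintype.card_subtype, Fintype.card_congr (equivOfMemIffEquivProd T W), Fintype.card_prod,
    Fintype.card_equiv (Fintype.equivOfCardEq _), Fintype.card_equiv (Fintype.equivOfCardEq _)]
  all_goals simp [Fintype.card_subtype_compl, card_compl, hW, hαβ]

theorem card_powersetCard_filter_card_inter_eq (S : Finset β) {m k : ℕ} (hkm : k ≤ m) :
    #{W ∈ powersetCard m univ | #(W ∩ S) = k} = (#S).choose k * (#Sᶜ).choose (m - k) := by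
  rw [← card_powersetCard, ← card_powersetCard, ← card_product]
  refine card_bij' (fun W _ => (W ∩ S, W \ S)) (fun AB _ => AB.1 ∪ AB.2) ?_ ?_ ?_ ?_
  · intro W hW
    simp only [mem_filter, mem_powersetCard_univ] at hW
    have := card_inter_add_card_sdiff W S
    simp only [mem_product, mem_powersetCard]
    refine ⟨⟨inter_subset_right, hW.2⟩, fun x hx => by simp_all, by omega⟩
  · rintro ⟨A, B⟩ hAB
    simp only [mem_product, mem_powersetCard, subset_compl_iff_disjoint_right] at hAB
    obtain ⟨⟨hAS, rfl⟩, hBS, hB⟩ := hAB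
    have hdisj : Disjoint A B := disjoint_of_subset_left hAS hBS.symm
    simp only [mem_filter, mem_powersetCard_univ, card_union_of_disjoint hdisj,
      (union_inter_and_union_sdiff hAS hBS).1, hB, and_true]
    omega
  · intro W _
    exact sup_inf_sdiff W S
  · rintro ⟨A, B⟩ hAB
    simp only [mem_product, mem_powersetCard, subset_compl_iff_disjoint_right] at hAB
    simp [union_inter_and_union_sdiff hAB.1.1 hAB.2.1]

theorem card_equiv_filter_card_filter_mem_eq (hαβ : Fintype.card α = Fintype.card β)
    (T : Finset α) (S : Finset β) {k : ℕ} (hk : k ≤ #T) :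
    #{e : α ≃ β | #{i ∈ T | e i ∈ S} = k}
      = (#S).choose k * (#Sᶜ).choose (#T - k) * (#T).factorial * (#Tᶜ).factorial := by
  set ℰ : Finset (α ≃ β) := {e | #{i ∈ T | e i ∈ S} = k}
  set 𝒲 : Finset (Finset β) := {W ∈ powersetCard #T univ | #(W ∩ S) = k}
  have hmaps : ∀ e ∈ ℰ, T.map e.toEmbedding ∈ 𝒲 := by
    intro e he
    simp only [ℰ, mem_filter, mem_univ, true_and] at he
    simp [𝒲, card_map_inter_eq_card_filter, he]
  have hfiber : ∀ W ∈ 𝒲,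
      #{e ∈ ℰ | T.map e.toEmbedding = W} = (#T).factorial * (#Tᶜ).factorial := by
    intro W hW
    simp only [𝒲, mem_filter, mem_powersetCard_univ] at hW
    rw [filter_filter, ← card_equiv_filter_map_eq hαβ T W hW.1]
    congr 1
    refine filter_congr fun e _ => and_iff_right_of_imp fun h => ?_
    rw [← card_map_inter_eq_card_filter, h, hW.2]
  rw [card_eq_sum_card_fiberwise hmaps, sum_congr rfl hfiber, sum_const, smul_eq_mul,
    card_powersetCard_filter_card_inter_eq S hk, ← mul_assoc]

end

theorem factorial_mul_div_choose {K : Type*} [Field K] [CharZero K] {m a : ℕ} (h : a ≤ m)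
    (x : K) :
    (m.factorial : K) * x / m.choose a = x * a.factorial * (m - a).factorial := by
  have := (Nat.factorial_pos m).ne'
  rw [Nat.cast_choose K h]
  field_simp

theorem card_subtype_le_val_and_eq_card_filter_succ {N j : ℕ} (hj : 0 < j)
    (p : Fin (N + 1) → Prop) [DecidablePred p] :
    Nat.card {i : Fin (N + 1) // j ≤ (i : ℕ) ∧ p i}
      = #{i : Fin N | j ≤ (i : ℕ) + 1 ∧ p i.succ} := by
  rw [Nat.card_eq_fintype_card, Fintype.card_subtype, Fin.card_filter_univ_succ']
  simp [Nat.pos_iff_ne_zero.1 hj]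

theorem card_filter_le_val_add_one {N j : ℕ} (hj : 0 < j) (hjN : j ≤ N + 1) :
    #{i : Fin N | j ≤ (i : ℕ) + 1} = N + 1 - j := by
  set T : Finset (Fin N) := {i | j ≤ (i : ℕ) + 1}
  have hcompl : #Tᶜ = min N (j - 1) := by
    rw [← Fin.card_filter_val_lt]
    exact congrArg card ((compl_filter _).trans (filter_congr fun i _ => by omega))
  have := card_add_card_compl T
  rw [Fintype.card_fin] at this
  omega

theorem card_subtype_ne_filter_val_lt {N j : ℕ} (q : Fin (N + 1)) (hq : j ≤ q) :
    #(({y : Fin (N + 1) | (y : ℕ) < j} : Finset _).subtype (· ≠ q)) = j := by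
  calc _ = #{y : Fin (N + 1) | (y : ℕ) < j} := by
        rw [card_subtype, filter_filter]
        exact congrArg card <| filter_congr fun y _ =>
          and_iff_left_of_imp fun hy => Fin.ne_of_val_ne (by omega)
    _ = j := by rw [Fin.card_filter_val_lt]; omega

theorem card_perm_apply_zero_eq_and_card_eq {N j k : ℕ} (hj : 0 < j) (hjN : j ≤ N)
    (hk : k ≤ N + 1 - j) :
    Nat.card {σ : Equiv.Perm (Fin (N + 1)) // σ 0 = ⟨j, by omega⟩ ∧
        Nat.card {i : Fin (N + 1) // j ≤ (i : ℕ) ∧ ((σ i) : ℕ) < j} = k}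
      = j.choose k * (N - j).choose (N + 1 - j - k) * (N + 1 - j).factorial
          * (j - 1).factorial := by
  set q : Fin (N + 1) := ⟨j, by omega⟩
  set T : Finset (Fin N) := {i | j ≤ (i : ℕ) + 1}
  set S : Finset {y // y ≠ q} := ({y : Fin (N + 1) | (y : ℕ) < j} : Finset _).subtype (· ≠ q)
  have hreduce : Nat.card {σ : Equiv.Perm (Fin (N + 1)) // σ 0 = q ∧
      Nat.card {i : Fin (N + 1) // j ≤ (i : ℕ) ∧ ((σ i) : ℕ) < j} = k}
      = #{e : Fin N ≃ {y // y ≠ q} | #{i ∈ T | e i ∈ S} = k} := by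
    rw [← Fintype.card_subtype, ← Nat.card_eq_fintype_card]
    refine Nat.card_congr ((Equiv.subtypeSubtypeEquivSubtypeInter _ _).symm.trans
      (Equiv.subtypeEquiv (equivFinSuccOfApplyZero q) fun σ => ?_))
    rw [card_subtype_le_val_and_eq_card_filter_succ hj]
    simp [S, T, filter_filter]
  have hT : #T = N + 1 - j := card_filter_le_val_add_one hj (by omega)
  have hS : #S = j := card_subtype_ne_filter_val_lt q le_rfl
  rw [hreduce, card_equiv_filter_card_filter_mem_eq (by simp) T S (by omega), card_compl,
    card_compl, hS, hT]
  simp only [Fintype.card_fin, Fintype.card_subtype_compl, Fintype.card_unique,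
    Nat.add_sub_cancel]
  rw [show N - (N + 1 - j) = j - 1 by omega]

/-- Among the `(n−1)!` permutations `σ` of `{1,…,n}` (modelled as `Equiv.Perm (Fin n)` with
the obvious shift by one) satisfying `σ(1) = j+1`, the number of those for which exactly `k`
indices `i ∈ {j+1,…,n}` satisfy `σ(i) ≤ j` equals
`(n−1)!·C(j,k)·C(n−j−1, n−j−k)/C(n−1, n−j) = C(j,k)·C(n−j−1, n−j−k)·(j−1)!·(n−j)!`. -/
theorem quickselect_partition_count (n j k : ℕ) (hj : 2 ≤ j)
    (hjn : j ≤ n - 1) (hk : k ≤ min j (n - j)) :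
    Nat.card {σ : Equiv.Perm (Fin n) //
        σ ⟨0, by omega⟩ = ⟨j, by omega⟩ ∧
        Nat.card {i : Fin n // j ≤ (i : ℕ) ∧ ((σ i) : ℕ) < j} = k}
      = j.choose k * (n - j - 1).choose (n - j - k) * (j - 1).factorial
          * (n - j).factorial ∧
    ((Nat.card {σ : Equiv.Perm (Fin n) //
        σ ⟨0, by omega⟩ = ⟨j, by omega⟩ ∧
        Nat.card {i : Fin n // j ≤ (i : ℕ) ∧ ((σ i) : ℕ) < j} = k} : ℝ)
      = ((n - 1).factorial : ℝ) * ((j.choose k : ℝ) * ((n - j - 1).choose (n - j - k) : ℝ))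
          / (((n - 1).choose (n - j) : ℝ))) := by
  obtain ⟨N, rfl⟩ : ∃ N, n = N + 1 := ⟨n - 1, by omega⟩
  simp only [Fin.zero_eta, Nat.add_sub_cancel]
  rw [card_perm_apply_zero_eq_and_card_eq (by omega) (by omega : j ≤ N) (by omega),
    show N + 1 - j - 1 = N - j by omega]
  refine ⟨by ring, ?_⟩
  rw [factorial_mul_div_choose (by omega), show N - (N + 1 - j) = j - 1 by omega]
  push_cast
  ring
end

section
/- There is exactly one probability measure μ on ℝ with the following property: whenever X and U are independent random variables with X distributed according to μ and U uniformly distributed on [0,1], the random variable √U·X + √U·(1−√U) is also distributed according to μ. -/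
/-!
Write `T μ` for the law of `√U·X + √U·(1 − √U)`. Conditioning on `U = u` gives the CDF identity
`(T μ)(-∞, t] = ∫₀¹ μ(-∞, t/√u − 1 + √u] du`.

Uniqueness. If `T μ = μ` and `t < 0`, the threshold `t/√u − 1 + √u` is at most `t` and tends to
`−∞` as `u → 0`, so the identity forces `μ(-∞, t] = μ(-∞, s]` for arbitrarily negative `s`, i.e.
`μ(-∞, t] = 0`; symmetrically `μ(t, ∞) = 0` for `t ≥ 1`. On measures living on `[-1, 1]`, `T`
shrinks the distance tested by bounded `L`-Lipschitz functions by the factor `E √U = 2/3`, because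
`x ↦ f(√u x + c)` is `√u L`-Lipschitz. Hence two fixed points integrate every bounded Lipschitz
function alike, and are equal.

Existence. `T` is monotone for the stochastic order, and `T δ₀` lives on `[0, 1]`, so its CDF lies
below that of `δ₀`. Hence the CDFs of `Tⁿ δ₀` decrease; their infimum is right-continuous, is `0`
on `(-∞, 0)` and `1` on `[1, ∞)`, and satisfies the CDF identity by monotone convergence, so it is
the CDF of a fixed point.
-/

open MeasureTheory

noncomputable section

def unif : Measure ℝ := volume.restrict (Set.Icc 0 1)

def rdeMap (q : ℝ × ℝ) : ℝ :=
  Real.sqrt q.2 * q.1 + Real.sqrt q.2 * (1 - Real.sqrt q.2)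

open Set Filter Topology Function
open scoped ENNReal NNReal

theorem MeasureTheory.Measure.ext_of_forall_lipschitz_integral_eq {Ω : Type*}
    [PseudoEMetricSpace Ω] [MeasurableSpace Ω] [BorelSpace Ω] {μ ν : Measure Ω}
    [IsFiniteMeasure μ] [IsFiniteMeasure ν]
    (h : ∀ (L : ℝ≥0) (f : Ω → ℝ), LipschitzWith L f → (∀ x, |f x| ≤ 1) →
      ∫ x, f x ∂μ = ∫ x, f x ∂ν) :
    μ = ν := by
  have hδ (n : ℕ) : (0 : ℝ) < 1 / (n + 1) := by positivity
  have h_closed {F : Set Ω} (hF : IsClosed F) : μ F = ν F := by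
    have hμF := tendsto_integral_thickenedIndicator_of_isClosed μ hF hδ
      tendsto_one_div_add_atTop_nhds_zero_nat
    have hνF := tendsto_integral_thickenedIndicator_of_isClosed ν hF hδ
      tendsto_one_div_add_atTop_nhds_zero_nat
    refine (measureReal_eq_measureReal_iff).1 (tendsto_nhds_unique hμF (hνF.congr fun n => ?_))
    refine (h _ _ (NNReal.isometry_coe.lipschitz.comp (lipschitzWith_thickenedIndicator _ F))
      fun x => ?_).symm
    simpa using thickenedIndicator_le_one (hδ n) F x
  exact ext_of_generate_finite _ (BorelSpace.measurable_eq.trans borel_eq_generateFrom_isClosed)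
    isPiSystem_isClosed (fun F hF => h_closed hF) (h_closed isClosed_univ)

lemma abs_integral_sub_apply_zero_le {μ : Measure ℝ} [IsProbabilityMeasure μ]
    (hμ : ∀ᵐ x ∂μ, |x| ≤ 1) {L : ℝ≥0} {f : ℝ → ℝ} (hf : LipschitzWith L f)
    (hfi : Integrable f μ) : |∫ x, f x ∂μ - f 0| ≤ L := by
  have hbound : ∀ᵐ x ∂μ, ‖f x - f 0‖ ≤ L := by
    filter_upwards [hμ] with x hx
    rw [← dist_eq_norm]
    calc dist (f x) (f 0) ≤ L * dist x 0 := hf.dist_le_mul x 0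
      _ ≤ L * 1 := by gcongr; simpa [Real.dist_eq] using hx
      _ = L := mul_one _
  have h := norm_integral_le_of_norm_le_const hbound
  rw [integral_sub hfi (integrable_const _)] at h
  simpa using h

lemma monotone_measure_Iic {α : Type*} [Preorder α] [MeasurableSpace α] (μ : Measure α) :
    Monotone fun t => μ (Iic t) :=
  fun _ _ h => measure_mono (Iic_subset_Iic.2 h)

lemma continuousWithinAt_measure_Iic (μ : Measure ℝ) [IsProbabilityMeasure μ] (t : ℝ) :
    ContinuousWithinAt (fun s => μ (Iic s)) (Ici t) t := by
  simp_rw [← ProbabilityTheory.ofReal_cdf]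
  exact ENNReal.continuous_ofReal.continuousAt.comp_continuousWithinAt
    ((ProbabilityTheory.cdf μ).right_continuous t)

lemma continuousWithinAt_Ici_iInf {ι α β : Type*} [CompleteLinearOrder α] [TopologicalSpace α]
    [OrderTopology α] [Preorder β] [TopologicalSpace β] {f : ι → β → α} {t : β}
    (hmono : ∀ i, Monotone (f i)) (hf : ∀ i, ContinuousWithinAt (f i) (Ici t) t) :
    ContinuousWithinAt (fun s => ⨅ i, f i s) (Ici t) t := by
  refine tendsto_order.2 ⟨fun a ha => ?_, fun a ha => ?_⟩
  · filter_upwards [self_mem_nhdsWithin] with s hs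
    exact ha.trans_le (iInf_mono fun i => hmono i hs)
  · obtain ⟨i, hi⟩ := iInf_lt_iff.1 ha
    filter_upwards [(hf i).eventually (gt_mem_nhds hi)] with s hs
    exact (iInf_le _ i).trans_lt hs

lemma measure_Iic_eq_zero_of_ae_mem_Icc {μ : Measure ℝ} (h : ∀ᵐ x ∂μ, x ∈ Icc 0 1) {t : ℝ}
    (ht : t < 0) : μ (Iic t) = 0 :=
  measure_eq_zero_iff_ae_notMem.2 (h.mono fun _ hx hxt => (ht.trans_le hx.1).not_ge hxt)

lemma measure_Iic_eq_one_of_ae_mem_Icc {μ : Measure ℝ} [IsProbabilityMeasure μ]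
    (h : ∀ᵐ x ∂μ, x ∈ Icc 0 1) {t : ℝ} (ht : 1 ≤ t) : μ (Iic t) = 1 :=
  ((ae_mem_iff_measure_eq measurableSet_Iic.nullMeasurableSet).1
    (h.mono fun _ hx => hx.2.trans ht)).trans measure_univ

instance : IsProbabilityMeasure unif :=
  ⟨by simp [unif]⟩

lemma ae_mem_Ioc_unif : ∀ᵐ u ∂unif, u ∈ Ioc 0 1 := by
  rw [unif, ← Measure.restrict_congr_set Ioc_ae_eq_Icc]
  exact ae_restrict_mem measurableSet_Ioc

lemma frequently_nhdsGT_zero_of_ae_unif {p : ℝ → Prop} (h : ∀ᵐ u ∂unif, p u) :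
    ∃ᶠ u in 𝓝[>] 0, p u := by
  rw [(nhdsGT_basis 0).frequently_iff]
  intro ε hε
  have hsub : Ioo 0 (min ε 1) ⊆ Icc 0 1 := fun u hu => ⟨hu.1.le, hu.2.le.trans (min_le_right _ _)⟩
  have hae : ∀ᵐ u ∂volume.restrict (Ioo 0 (min ε 1)), u ∈ Ioo 0 (min ε 1) ∧ p u :=
    (ae_restrict_mem measurableSet_Ioo).and (ae_restrict_of_ae_restrict_of_subset hsub h)
  have : (ae (volume.restrict (Ioo (0 : ℝ) (min ε 1)))).NeBot :=
    ae_restrict_neBot.2 (by simp [hε])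
  obtain ⟨u, hu, hpu⟩ := hae.exists
  exact ⟨u, ⟨hu.1, hu.2.trans_le (min_le_left _ _)⟩, hpu⟩

/-- Bounded by `a` with mean at least `a`, `g` equals `a` almost everywhere, so `a` is a limit
value of `g` at `0⁺`. -/
lemma eq_zero_of_le_lintegral_unif {g : ℝ → ℝ≥0∞} {a : ℝ≥0∞} (ha : a ≠ ∞)
    (hle : ∀ u ∈ Ioc 0 1, g u ≤ a) (hint : a ≤ ∫⁻ u, g u ∂unif)
    (hlim : Tendsto g (𝓝[>] 0) (𝓝 0)) : a = 0 := by
  have hle' : g ≤ᵐ[unif] fun _ => a := by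
    filter_upwards [ae_mem_Ioc_unif] with u hu using hle u hu
  have hg_eq : g =ᵐ[unif] fun _ => a :=
    ae_eq_of_ae_le_of_lintegral_le hle'
      ((lintegral_mono_ae hle').trans_lt (by simpa using ha.lt_top)).ne aemeasurable_const
      (by simpa using hint)
  exact (tendsto_nhds_unique_of_frequently_eq hlim tendsto_const_nhds
    (frequently_nhdsGT_zero_of_ae_unif hg_eq)).symm

lemma integral_sqrt_unif : ∫ u, √u ∂unif = 2 / 3 := by
  rw [unif, integral_Icc_eq_integral_Ioc, ← intervalIntegral.integral_of_le zero_le_one]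
  simp_rw [Real.sqrt_eq_rpow]
  rw [integral_rpow (Or.inl (by norm_num))]
  norm_num

lemma measurable_rdeMap : Measurable rdeMap := by
  unfold rdeMap; fun_prop

lemma rdeMap_mem_Icc {x u : ℝ} (hx : x ∈ Icc 0 1) (hu : u ∈ Icc 0 1) :
    rdeMap (x, u) ∈ Icc 0 1 := by
  have hs0 : 0 ≤ √u := Real.sqrt_nonneg u
  have hs1 : √u ≤ 1 := Real.sqrt_le_one.2 hu.2
  constructor <;> simp only [rdeMap] <;> nlinarith [hx.1, hx.2]

lemma lipschitzWith_rdeMap_left (u : ℝ) :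
    LipschitzWith (√u).toNNReal (fun x => rdeMap (x, u)) :=
  LipschitzWith.of_dist_le_mul fun x y => by
    simp [rdeMap, Real.dist_eq, ← mul_sub, abs_mul, abs_of_nonneg (Real.sqrt_nonneg u)]

def rdeArg (t u : ℝ) : ℝ := t / √u - (1 - √u)

lemma measurable_rdeArg (t : ℝ) : Measurable (rdeArg t) := by
  unfold rdeArg; fun_prop

lemma rdeMap_le_iff {x t u : ℝ} (hu : 0 < u) : rdeMap (x, u) ≤ t ↔ x ≤ rdeArg t u := by
  have hs : 0 < √u := Real.sqrt_pos.2 hu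
  rw [rdeMap, rdeArg, le_sub_iff_add_le, le_div_iff₀ hs]
  constructor <;> intro h <;> linarith

lemma rdeArg_le_self {t u : ℝ} (ht : t ≤ 0) (hu : u ∈ Ioc 0 1) : rdeArg t u ≤ t := by
  have hs : 0 < √u := Real.sqrt_pos.2 hu.1
  have hs1 : √u ≤ 1 := Real.sqrt_le_one.2 hu.2
  have : t / √u ≤ t := by rw [div_le_iff₀ hs]; nlinarith
  unfold rdeArg; nlinarith

lemma self_le_rdeArg {t u : ℝ} (ht : 1 ≤ t) (hu : u ∈ Ioc 0 1) : t ≤ rdeArg t u := by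
  have hs : 0 < √u := Real.sqrt_pos.2 hu.1
  have hs1 : √u ≤ 1 := Real.sqrt_le_one.2 hu.2
  have : t + (1 - √u) ≤ t / √u := by rw [le_div_iff₀ hs]; nlinarith
  unfold rdeArg; linarith

lemma tendsto_inv_sqrt_nhdsGT_zero : Tendsto (fun u : ℝ => (√u)⁻¹) (𝓝[>] 0) atTop := by
  simp_rw [← Real.sqrt_inv]
  exact Real.tendsto_sqrt_atTop.comp tendsto_inv_nhdsGT_zero

lemma tendsto_one_sub_sqrt_nhdsGT_zero : Tendsto (fun u : ℝ => 1 - √u) (𝓝[>] 0) (𝓝 1) := by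
  simpa using ((Real.continuous_sqrt.tendsto 0).mono_left nhdsWithin_le_nhds).const_sub 1

lemma tendsto_rdeArg_atBot {t : ℝ} (ht : t < 0) : Tendsto (rdeArg t) (𝓝[>] 0) atBot :=
  ((tendsto_inv_sqrt_nhdsGT_zero.const_mul_atTop_of_neg ht).atBot_add
    tendsto_one_sub_sqrt_nhdsGT_zero.neg).congr fun u => by
      simp [rdeArg, div_eq_mul_inv, sub_eq_add_neg]

lemma tendsto_rdeArg_atTop {t : ℝ} (ht : 0 < t) : Tendsto (rdeArg t) (𝓝[>] 0) atTop :=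
  ((tendsto_inv_sqrt_nhdsGT_zero.const_mul_atTop ht).atTop_add
    tendsto_one_sub_sqrt_nhdsGT_zero.neg).congr fun u => by
      simp [rdeArg, div_eq_mul_inv, sub_eq_add_neg]

def rdeOp (μ : Measure ℝ) : Measure ℝ := (μ.prod unif).map rdeMap

instance (μ : Measure ℝ) [IsProbabilityMeasure μ] : IsProbabilityMeasure (rdeOp μ) :=
  Measure.isProbabilityMeasure_map measurable_rdeMap.aemeasurable

lemma rdeOp_apply (μ : Measure ℝ) [SFinite μ] {s : Set ℝ} (hs : MeasurableSet s) :
    rdeOp μ s = ∫⁻ u, μ ((fun x => rdeMap (x, u)) ⁻¹' s) ∂unif := by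
  rw [rdeOp, Measure.map_apply measurable_rdeMap hs,
    Measure.prod_apply_symm (measurable_rdeMap hs)]
  rfl

lemma rdeOp_Iic (μ : Measure ℝ) [SFinite μ] (t : ℝ) :
    rdeOp μ (Iic t) = ∫⁻ u, μ (Iic (rdeArg t u)) ∂unif := by
  rw [rdeOp_apply μ measurableSet_Iic]
  refine lintegral_congr_ae ?_
  filter_upwards [ae_mem_Ioc_unif] with u hu
  congr 1
  ext x
  exact rdeMap_le_iff hu.1

lemma rdeOp_Ioi (μ : Measure ℝ) [SFinite μ] (t : ℝ) :
    rdeOp μ (Ioi t) = ∫⁻ u, μ (Ioi (rdeArg t u)) ∂unif := by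
  rw [rdeOp_apply μ measurableSet_Ioi]
  refine lintegral_congr_ae ?_
  filter_upwards [ae_mem_Ioc_unif] with u hu
  congr 1
  ext x
  simp [← not_le, rdeMap_le_iff hu.1]

lemma rdeOp_Iic_le {μ ν : Measure ℝ} [SFinite μ] [SFinite ν] (h : ∀ s, μ (Iic s) ≤ ν (Iic s))
    (t : ℝ) : rdeOp μ (Iic t) ≤ rdeOp ν (Iic t) := by
  rw [rdeOp_Iic, rdeOp_Iic]
  exact lintegral_mono fun _ => h _

lemma ae_mem_Icc_rdeOp {μ : Measure ℝ} [SFinite μ] (h : ∀ᵐ x ∂μ, x ∈ Icc 0 1) :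
    ∀ᵐ x ∂rdeOp μ, x ∈ Icc 0 1 := by
  refine (ae_map_iff measurable_rdeMap.aemeasurable measurableSet_Icc).2 ?_
  filter_upwards [Measure.quasiMeasurePreserving_fst.ae h,
    Measure.quasiMeasurePreserving_snd.ae (ae_restrict_mem measurableSet_Icc)] with q hx hu
  exact rdeMap_mem_Icc hx hu

lemma integrable_comp_rdeMap (μ : Measure ℝ) [IsFiniteMeasure μ] {f : ℝ → ℝ} (hf : Measurable f)
    (hb : ∀ x, |f x| ≤ 1) : Integrable (fun q => f (rdeMap q)) (μ.prod unif) :=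
  .of_bound (hf.comp measurable_rdeMap).aestronglyMeasurable 1 (ae_of_all _ fun _ => hb _)

lemma integral_rdeOp (μ : Measure ℝ) [IsFiniteMeasure μ] {f : ℝ → ℝ} (hf : Measurable f)
    (hb : ∀ x, |f x| ≤ 1) :
    ∫ x, f x ∂rdeOp μ = ∫ u, ∫ x, f (rdeMap (x, u)) ∂μ ∂unif := by
  rw [rdeOp, integral_map measurable_rdeMap.aemeasurable hf.aestronglyMeasurable,
    integral_prod_symm _ (integrable_comp_rdeMap μ hf hb)]

lemma abs_integral_rdeOp_sub_le {μ ν : Measure ℝ} [IsProbabilityMeasure μ]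
    [IsProbabilityMeasure ν] {c : ℝ}
    (h : ∀ (L : ℝ≥0) (f : ℝ → ℝ), LipschitzWith L f → (∀ x, |f x| ≤ 1) →
      |∫ x, f x ∂μ - ∫ x, f x ∂ν| ≤ c * L)
    {L : ℝ≥0} {f : ℝ → ℝ} (hf : LipschitzWith L f) (hb : ∀ x, |f x| ≤ 1) :
    |∫ x, f x ∂rdeOp μ - ∫ x, f x ∂rdeOp ν| ≤ 2 / 3 * c * L := by
  set g : Measure ℝ → ℝ → ℝ := fun ρ u => ∫ x, f (rdeMap (x, u)) ∂ρ
  have hgi (ρ : Measure ℝ) [IsFiniteMeasure ρ] : Integrable (g ρ) unif :=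
    (integrable_comp_rdeMap ρ hf.continuous.measurable hb).integral_prod_right
  have hslice (u : ℝ) : |g μ u - g ν u| ≤ c * L * √u := by
    have := h _ _ (hf.comp (lipschitzWith_rdeMap_left u)) fun x => hb _
    simpa [Real.coe_toNNReal _ (Real.sqrt_nonneg u), mul_assoc] using this
  calc |∫ x, f x ∂rdeOp μ - ∫ x, f x ∂rdeOp ν| = |∫ u, (g μ u - g ν u) ∂unif| := by
        rw [integral_rdeOp μ hf.continuous.measurable hb,
          integral_rdeOp ν hf.continuous.measurable hb, integral_sub (hgi μ) (hgi ν)]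
    _ ≤ ∫ u, |g μ u - g ν u| ∂unif := abs_integral_le_integral_abs
    _ ≤ ∫ u, c * L * √u ∂unif :=
        integral_mono_of_nonneg (ae_of_all _ fun u => abs_nonneg _)
          (continuous_const.mul Real.continuous_sqrt).integrableOn_Icc (ae_of_all _ hslice)
    _ = 2 / 3 * c * L := by rw [integral_const_mul, integral_sqrt_unif]; ring

section FixedPoint

variable {μ : Measure ℝ} [IsProbabilityMeasure μ] (hμ : IsFixedPt rdeOp μ)
include hμ

lemma measure_Iic_eq_zero_of_isFixedPt {t : ℝ} (ht : t < 0) : μ (Iic t) = 0 := by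
  refine eq_zero_of_le_lintegral_unif (measure_ne_top μ _)
    (fun u hu => measure_mono (Iic_subset_Iic.2 (rdeArg_le_self ht.le hu))) ?_ ?_
  · rw [← rdeOp_Iic, hμ]
  · have h := tendsto_measure_iInter_atBot (μ := μ)
      (fun x : ℝ => measurableSet_Iic.nullMeasurableSet) (fun _ _ => Iic_subset_Iic.2)
      ⟨0, measure_ne_top μ _⟩
    rw [show ⋂ x : ℝ, Iic x = ∅ by ext x; simpa using ⟨x - 1, by linarith⟩, measure_empty] at h
    exact h.comp (tendsto_rdeArg_atBot ht)

lemma measure_Ioi_eq_zero_of_isFixedPt {t : ℝ} (ht : 1 ≤ t) : μ (Ioi t) = 0 := by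
  refine eq_zero_of_le_lintegral_unif (measure_ne_top μ _)
    (fun u hu => measure_mono (Ioi_subset_Ioi (self_le_rdeArg ht hu))) ?_ ?_
  · rw [← rdeOp_Ioi, hμ]
  · have h := tendsto_measure_iInter_atTop (μ := μ)
      (fun x : ℝ => measurableSet_Ioi.nullMeasurableSet) (fun _ _ => Ioi_subset_Ioi)
      ⟨0, measure_ne_top μ _⟩
    rw [show ⋂ x : ℝ, Ioi x = ∅ by ext x; simpa using ⟨x, le_rfl⟩, measure_empty] at h
    exact h.comp (tendsto_rdeArg_atTop (by linarith))

lemma ae_abs_le_one_of_isFixedPt : ∀ᵐ x ∂μ, |x| ≤ 1 := by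
  have hnull : μ (Iic (-1) ∪ Ioi 1) = 0 :=
    measure_union_null (measure_Iic_eq_zero_of_isFixedPt hμ (by norm_num))
      (measure_Ioi_eq_zero_of_isFixedPt hμ le_rfl)
  filter_upwards [measure_eq_zero_iff_ae_notMem.1 hnull] with x hx
  simp only [mem_union, mem_Iic, mem_Ioi, not_or, not_le, not_lt] at hx
  exact abs_le.2 ⟨hx.1.le, hx.2⟩

end FixedPoint

section Uniqueness

variable {μ ν : Measure ℝ} [IsProbabilityMeasure μ] [IsProbabilityMeasure ν]
  (hμ : IsFixedPt rdeOp μ) (hν : IsFixedPt rdeOp ν)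
include hμ hν

lemma abs_integral_sub_le_of_isFixedPt (n : ℕ) {L : ℝ≥0} {f : ℝ → ℝ} (hf : LipschitzWith L f)
    (hb : ∀ x, |f x| ≤ 1) : |∫ x, f x ∂μ - ∫ x, f x ∂ν| ≤ 2 * (2 / 3) ^ n * L := by
  induction n generalizing L f with
  | zero =>
    have hfi (ρ : Measure ℝ) [IsProbabilityMeasure ρ] : Integrable f ρ :=
      .of_bound hf.continuous.aestronglyMeasurable 1 (ae_of_all _ fun x => by simpa using hb x)
    have hμf := abs_integral_sub_apply_zero_le (ae_abs_le_one_of_isFixedPt hμ) hf (hfi μ)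
    have hνf := abs_integral_sub_apply_zero_le (ae_abs_le_one_of_isFixedPt hν) hf (hfi ν)
    calc |∫ x, f x ∂μ - ∫ x, f x ∂ν| ≤ |∫ x, f x ∂μ - f 0| + |f 0 - ∫ x, f x ∂ν| :=
          abs_sub_le _ _ _
      _ ≤ L + L := add_le_add hμf (abs_sub_comm (f 0) _ ▸ hνf)
      _ = 2 * (2 / 3) ^ 0 * L := by ring
  | succ n ih =>
    rw [← hμ.eq, ← hν.eq]
    calc |∫ x, f x ∂rdeOp μ - ∫ x, f x ∂rdeOp ν| ≤ 2 / 3 * (2 * (2 / 3) ^ n) * L :=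
          abs_integral_rdeOp_sub_le (fun _ _ hf hb => ih hf hb) hf hb
      _ = 2 * (2 / 3) ^ (n + 1) * L := by ring

lemma eq_of_isFixedPt : μ = ν := by
  refine Measure.ext_of_forall_lipschitz_integral_eq fun L f hf hb => ?_
  have hlim : Tendsto (fun n : ℕ => 2 * (2 / 3 : ℝ) ^ n * L) atTop (𝓝 0) := by
    simpa using ((tendsto_pow_atTop_nhds_zero_of_lt_one (by norm_num) (by norm_num)).const_mul
      2).mul_const (L : ℝ)
  have h := ge_of_tendsto' hlim fun n => abs_integral_sub_le_of_isFixedPt hμ hν n hf hb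
  exact sub_eq_zero.1 (abs_nonpos_iff.1 h)

end Uniqueness

def rdeApprox (n : ℕ) : Measure ℝ := rdeOp^[n] (Measure.dirac 0)

lemma rdeApprox_succ (n : ℕ) : rdeApprox (n + 1) = rdeOp (rdeApprox n) :=
  iterate_succ_apply' rdeOp n _

instance (n : ℕ) : IsProbabilityMeasure (rdeApprox n) := by
  induction n with
  | zero => exact inferInstanceAs (IsProbabilityMeasure (Measure.dirac (0 : ℝ)))
  | succ n ih => rw [rdeApprox_succ]; infer_instance

lemma ae_mem_Icc_rdeApprox (n : ℕ) : ∀ᵐ x ∂rdeApprox n, x ∈ Icc 0 1 := by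
  induction n with
  | zero => simp [rdeApprox]
  | succ n ih => rw [rdeApprox_succ]; exact ae_mem_Icc_rdeOp ih

lemma rdeApprox_succ_Iic_le (n : ℕ) (t : ℝ) :
    rdeApprox (n + 1) (Iic t) ≤ rdeApprox n (Iic t) := by
  induction n generalizing t with
  | zero =>
    rcases lt_or_ge t 0 with ht | ht
    · simp [measure_Iic_eq_zero_of_ae_mem_Icc (ae_mem_Icc_rdeApprox 1) ht]
    · rw [show rdeApprox 0 = Measure.dirac 0 from rfl,
        Measure.dirac_apply_of_mem (mem_Iic.2 ht)]
      exact prob_le_one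
  | succ n ih =>
    simpa only [rdeApprox_succ] using rdeOp_Iic_le ih t

lemma antitone_rdeApprox_Iic (t : ℝ) : Antitone fun n => rdeApprox n (Iic t) :=
  antitone_nat_of_succ_le fun n => rdeApprox_succ_Iic_le n t

def rdeCdf (t : ℝ) : ℝ≥0∞ := ⨅ n, rdeApprox n (Iic t)

lemma monotone_rdeCdf : Monotone rdeCdf :=
  fun _ _ h => iInf_mono fun _ => monotone_measure_Iic _ h

lemma rdeCdf_ne_top (t : ℝ) : rdeCdf t ≠ ∞ :=
  ne_top_of_le_ne_top ENNReal.one_ne_top (iInf_le_of_le 0 prob_le_one)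

lemma rdeCdf_of_neg {t : ℝ} (ht : t < 0) : rdeCdf t = 0 :=
  le_antisymm
    (iInf_le_of_le 1 (measure_Iic_eq_zero_of_ae_mem_Icc (ae_mem_Icc_rdeApprox 1) ht).le) zero_le

lemma rdeCdf_of_one_le {t : ℝ} (ht : 1 ≤ t) : rdeCdf t = 1 := by
  simp [rdeCdf, measure_Iic_eq_one_of_ae_mem_Icc (ae_mem_Icc_rdeApprox _) ht]

lemma rdeCdf_eq_lintegral (t : ℝ) : rdeCdf t = ∫⁻ u, rdeCdf (rdeArg t u) ∂unif := by
  have h := lintegral_iInf (μ := unif) (f := fun n u => rdeApprox n (Iic (rdeArg t u)))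
    (fun n => (monotone_measure_Iic _).measurable.comp (measurable_rdeArg t))
    (fun _ _ h u => antitone_rdeApprox_Iic _ h)
    ((lintegral_mono fun _ => prob_le_one).trans_lt (by simp)).ne
  simp only [rdeCdf] at h ⊢
  rw [h, ← (antitone_rdeApprox_Iic t).iInf_nat_add 1]
  simp_rw [rdeApprox_succ, rdeOp_Iic]

lemma continuousWithinAt_rdeCdf (t : ℝ) : ContinuousWithinAt rdeCdf (Ici t) t :=
  continuousWithinAt_Ici_iInf (fun _ => monotone_measure_Iic _)
    fun _ => continuousWithinAt_measure_Iic _ t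

def rdeStieltjes : StieltjesFunction ℝ where
  toFun t := (rdeCdf t).toReal
  mono' _ _ h := ENNReal.toReal_mono (rdeCdf_ne_top _) (monotone_rdeCdf h)
  right_continuous' t :=
    (ENNReal.tendsto_toReal (rdeCdf_ne_top t)).comp (continuousWithinAt_rdeCdf t)

lemma tendsto_rdeStieltjes_atBot : Tendsto rdeStieltjes atBot (𝓝 0) :=
  tendsto_const_nhds.congr' <| (eventually_lt_atBot 0).mono fun t ht => by
    simp [rdeStieltjes, rdeCdf_of_neg ht]

lemma tendsto_rdeStieltjes_atTop : Tendsto rdeStieltjes atTop (𝓝 1) :=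
  tendsto_const_nhds.congr' <| (eventually_ge_atTop 1).mono fun t ht => by
    simp [rdeStieltjes, rdeCdf_of_one_le ht]

def rdeSolution : Measure ℝ := rdeStieltjes.measure

instance : IsProbabilityMeasure rdeSolution :=
  rdeStieltjes.isProbabilityMeasure tendsto_rdeStieltjes_atBot tendsto_rdeStieltjes_atTop

lemma rdeSolution_Iic (t : ℝ) : rdeSolution (Iic t) = rdeCdf t := by
  rw [rdeSolution, rdeStieltjes.measure_Iic tendsto_rdeStieltjes_atBot, sub_zero]
  exact ENNReal.ofReal_toReal (rdeCdf_ne_top t)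

lemma isFixedPt_rdeSolution : IsFixedPt rdeOp rdeSolution :=
  Measure.ext_of_Iic _ _ fun t => by
    simp_rw [rdeOp_Iic, rdeSolution_Iic]
    exact (rdeCdf_eq_lintegral t).symm

/-- There is exactly one probability measure `μ` on `ℝ` such that, whenever `X` and `U` are
independent with `X ∼ μ` and `U` uniform on `[0,1]`, the random variable
`√U·X + √U·(1 − √U)` is again distributed according to `μ` (i.e. the pushforward of
`μ ⊗ unif` under `rdeMap` is `μ`). -/
theorem rde_unique_solution :
    ∃! μ : Measure ℝ,
      IsProbabilityMeasure μ ∧ Measure.map rdeMap (μ.prod unif) = μ :=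
  ⟨rdeSolution, ⟨inferInstance, isFixedPt_rdeSolution⟩,
    fun _ ⟨_, hν⟩ => eq_of_isFixedPt hν isFixedPt_rdeSolution⟩
end
end

section
/- Let X be the solution of the recursive distributional equation X =_d √U·X + √U·(1−√U). Then for every integer k ≥ 1, E[X^k] = 2·(k+2)!·(k−1)! · Σ_{i=0}^{k−1} E[X^i]/((2k−i+2)!·i!). In particular E[X] = 1/2, E[X²] = 4/15 and Var(X) = 1/60. -/
/-! The map `x ↦ √u·x + √u·(1 − √u)` shrinks the distance `d` to `[0,1]` by the factor `√u ≤ 1`,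
which is at most `1/2` when `u ≤ 1/4`. Comparing tails of `d` on both sides of the
equation gives `P(d(X) > t) ≤ P(d(X) > 2t)`, so `X ∈ [0,1]` almost surely and all moments exist.
Expanding `(√U·X + √U·(1 − √U))^k` binomially and using independence together with the Beta
integral `E[√U^k (1 − √U)^j] = 2 (k+1)! j! / (k+j+2)!` (substitute `U = T²`) gives a linear
relation in which `E[X^k]` also appears on the right, with coefficient `2/(k+2)`; solving for it
yields the recursion. -/

open MeasureTheory Set
open scoped Nat

noncomputable section

/-- `μ` is a (probability) solution of the recursive distributional equation
`X =_d √U·X + √U·(1 − √U)` with `X, U` independent and `U` uniform on `[0,1]`. -/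
def IsRDESolution (μ : Measure ℝ) : Prop :=
  IsProbabilityMeasure μ ∧ Measure.map rdeMap (μ.prod unif) = μ

theorem integral_pow_mul_one_sub_pow (a b : ℕ) :
    ∫ t in (0 : ℝ)..1, t ^ a * (1 - t) ^ b = (a ! * b ! : ℝ) / (a + b + 1)! := by
  have hβ := Complex.betaIntegral_eq_Gamma_mul_div (a + 1) (b + 1)
    (by norm_cast; omega) (by norm_cast; omega)
  have hsum : ((a : ℂ) + 1) + ((b : ℂ) + 1) = ((a + b + 1 : ℕ) : ℂ) + 1 := by push_cast; ring
  rw [hsum, Complex.Gamma_nat_eq_factorial, Complex.Gamma_nat_eq_factorial,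
    Complex.Gamma_nat_eq_factorial, Complex.betaIntegral] at hβ
  simp only [add_sub_cancel_right, Complex.cpow_natCast] at hβ
  rw [← Complex.ofReal_inj]
  push_cast
  rw [← hβ, ← intervalIntegral.integral_ofReal]
  push_cast
  rfl

theorem integral_comp_sqrt_unitInterval {f : ℝ → ℝ} (hf : Continuous f) :
    ∫ u in (0 : ℝ)..1, f (Real.sqrt u) = ∫ t in (0 : ℝ)..1, 2 * t * f t := by
  calc ∫ u in (0 : ℝ)..1, f (Real.sqrt u) = ∫ u in (0 : ℝ) ^ 2..1 ^ 2, f (Real.sqrt u) := by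
        norm_num
    _ = ∫ t in (0 : ℝ)..1, (2 * t) • ((fun u => f (Real.sqrt u)) ∘ fun t => t ^ 2) t :=
        (intervalIntegral.integral_deriv_smul_comp (g := fun u => f (Real.sqrt u))
          (fun t _ => by simpa using hasDerivAt_pow 2 t) (by fun_prop) (by fun_prop)).symm
    _ = ∫ t in (0 : ℝ)..1, 2 * t * f t := by
        refine intervalIntegral.integral_congr fun t ht => ?_
        rw [uIcc_of_le zero_le_one] at ht
        simp [Real.sqrt_sq ht.1]

theorem measure_pos_eq_zero_of_tail_le_double {α : Type*} [MeasurableSpace α] {μ : Measure α}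
    [IsFiniteMeasure μ] {f : α → ℝ} (hf : Measurable f)
    (h : ∀ t > 0, μ {x | t < f x} ≤ μ {x | 2 * t < f x}) :
    μ {x | 0 < f x} = 0 := by
  have tail_zero : ∀ t > 0, μ {x | t < f x} = 0 := by
    intro t ht
    have hle : ∀ n : ℕ, μ {x | t < f x} ≤ μ {x | 2 ^ n * t < f x} := by
      intro n
      induction n with
      | zero => simp
      | succ n ih =>
        rw [pow_succ', mul_assoc]
        exact ih.trans (h _ (by positivity))
    have hanti : Antitone fun n : ℕ => {x | 2 ^ n * t < f x} := fun m n hmn x hx =>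
      lt_of_le_of_lt (mul_le_mul_of_nonneg_right (pow_le_pow_right₀ one_le_two hmn) ht.le) hx
    have hempty : ⋂ n : ℕ, {x | 2 ^ n * t < f x} = ∅ := by
      refine eq_empty_of_forall_notMem fun x hx => ?_
      obtain ⟨n, hn⟩ := pow_unbounded_of_one_lt (f x / t) one_lt_two
      exact (mem_iInter.1 hx n).not_ge ((div_lt_iff₀ ht).1 hn).le
    have hlim := tendsto_measure_iInter_atTop
      (fun n => (measurableSet_lt measurable_const hf).nullMeasurableSet) hanti
      ⟨0, measure_ne_top μ _⟩
    rw [hempty, measure_empty] at hlim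
    exact le_antisymm (ge_of_tendsto' hlim hle) zero_le
  have hunion : {x | 0 < f x} = ⋃ n : ℕ, {x | 1 / (n + 1 : ℝ) < f x} := by
    ext x
    simp only [mem_ofPred_eq, mem_iUnion]
    exact ⟨fun hx => exists_nat_one_div_lt hx, fun ⟨n, hn⟩ => lt_trans (by positivity) hn⟩
  rw [hunion]
  exact measure_iUnion_null fun n => tail_zero _ (by positivity)

theorem ENNReal.le_of_le_mul_add_mul {a b p q : ENNReal} (ha : a ≠ ⊤) (hp₀ : p ≠ 0)
    (hp : p ≠ ⊤) (hpq : p + q = 1) (h : a ≤ b * p + a * q) : a ≤ b := by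
  have hq : q ≠ ⊤ := ne_top_of_le_ne_top ENNReal.one_ne_top (hpq ▸ le_add_self)
  have hap : a * p + a * q ≤ b * p + a * q := by rwa [← mul_add, hpq, mul_one]
  exact (ENNReal.mul_le_mul_iff_left hp₀ hp).1
    (ENNReal.le_of_add_le_add_right (ENNReal.mul_ne_top ha hq) hap)

instance inst_s11 : IsProbabilityMeasure unif := ⟨by simp [unif]⟩

theorem ae_unif_mem_Icc : ∀ᵐ u ∂unif, u ∈ Icc (0 : ℝ) 1 := ae_restrict_mem measurableSet_Icc

theorem integral_unif_eq_intervalIntegral (f : ℝ → ℝ) :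
    ∫ u, f u ∂unif = ∫ u in (0 : ℝ)..1, f u := by
  rw [unif, intervalIntegral.integral_of_le zero_le_one, integral_Icc_eq_integral_Ioc]

theorem integral_unif_sqrt_pow_mul_one_sub_sqrt_pow (k j : ℕ) :
    ∫ u, Real.sqrt u ^ k * (1 - Real.sqrt u) ^ j ∂unif =
      2 * (k + 1)! * j ! / (k + j + 2)! := by
  rw [integral_unif_eq_intervalIntegral, 
    integral_comp_sqrt_unitInterval (f := fun t => t ^ k * (1 - t) ^ j) (by fun_prop)]
  simp_rw [show ∀ t : ℝ, 2 * t * (t ^ k * (1 - t) ^ j) = 2 * (t ^ (k + 1) * (1 - t) ^ j) by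
    intro t; ring]
  rw [intervalIntegral.integral_const_mul, integral_pow_mul_one_sub_pow,
    show k + 1 + j + 1 = k + j + 2 by ring]
  ring

def distUnitInterval (x : ℝ) : ℝ := max (x - 1) (max (-x) 0)

theorem distUnitInterval_pos_iff {x : ℝ} : 0 < distUnitInterval x ↔ x ∉ Icc 0 1 := by
  simp only [distUnitInterval, lt_max_iff, lt_self_iff_false, or_false, mem_Icc, not_and_or,
    not_le, sub_pos, neg_pos]
  exact or_comm

theorem distUnitInterval_nonneg (x : ℝ) : 0 ≤ distUnitInterval x :=
  (le_max_right _ _).trans (le_max_right _ _)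

theorem measurable_distUnitInterval : Measurable distUnitInterval := by
  unfold distUnitInterval; fun_prop

theorem distUnitInterval_mul_add_le {s : ℝ} (hs₀ : 0 ≤ s) (hs₁ : s ≤ 1) (x : ℝ) :
    distUnitInterval (s * x + s * (1 - s)) ≤ s * distUnitInterval x := by
  have h₁ : x - 1 ≤ distUnitInterval x := le_max_left _ _
  have h₂ : -x ≤ distUnitInterval x := (le_max_left _ _).trans (le_max_right _ _)
  refine max_le ?_ (max_le ?_ (mul_nonneg hs₀ (distUnitInterval_nonneg x)))
  · nlinarith [mul_le_mul_of_nonneg_left h₁ hs₀]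
  · nlinarith [mul_le_mul_of_nonneg_left h₂ hs₀]

theorem continuous_rdeMap : Continuous rdeMap := by
  unfold rdeMap; fun_prop

theorem IsRDESolution.measure_tail_le_double {μ : Measure ℝ} (hμ : IsRDESolution μ) (t : ℝ) :
    μ {x | t < distUnitInterval x} ≤ μ {x | 2 * t < distUnitInterval x} := by
  have := hμ.1
  set A := {x | t < distUnitInterval x}
  set B := {x | 2 * t < distUnitInterval x}
  set I := Icc (0 : ℝ) (1 / 4)
  have hA : MeasurableSet A := measurableSet_lt measurable_const measurable_distUnitInterval
  -- `rdeMap (·, u)` shrinks the distance to `[0,1]` by the factor `√u`, which is `≤ 1/2` on `I`.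
  have hcover : rdeMap ⁻¹' A ≤ᵐ[μ.prod unif] (B ×ˢ I ∪ A ×ˢ Iᶜ : Set (ℝ × ℝ)) := by
    filter_upwards [Measure.quasiMeasurePreserving_snd.ae ae_unif_mem_Icc]
      with ⟨x, u⟩ hu (hx : t < distUnitInterval (rdeMap (x, u)))
    have hs₀ := Real.sqrt_nonneg u
    have hs₁ : Real.sqrt u ≤ 1 := Real.sqrt_le_one.2 hu.2
    have hd₀ := distUnitInterval_nonneg x
    have hx' : t < Real.sqrt u * distUnitInterval x :=
      hx.trans_le (distUnitInterval_mul_add_le hs₀ hs₁ x)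
    by_cases huI : u ∈ I
    · have hs : Real.sqrt u ≤ 1 / 2 := by
        rw [Real.sqrt_le_iff]; exact ⟨by norm_num, by norm_num; exact huI.2⟩
      left
      exact ⟨show 2 * t < _ by nlinarith [mul_le_mul_of_nonneg_right hs hd₀], huI⟩
    · right
      exact ⟨show t < _ by nlinarith [mul_le_mul_of_nonneg_right hs₁ hd₀], huI⟩
  have hI : unif I ≠ 0 := by
    simp [unif, I, Measure.restrict_apply measurableSet_Icc, Icc_inter_Icc]
  refine ENNReal.le_of_le_mul_add_mul (measure_ne_top μ A) hI (measure_ne_top _ _)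
    (measure_add_measure_compl measurableSet_Icc |>.trans measure_univ) ?_
  calc μ A = μ.prod unif (rdeMap ⁻¹' A) := by
        conv_lhs => rw [← hμ.2]
        exact Measure.map_apply continuous_rdeMap.measurable hA
    _ ≤ μ.prod unif (B ×ˢ I ∪ A ×ˢ Iᶜ) := measure_mono_ae hcover
    _ ≤ μ B * unif I + μ A * unif Iᶜ := by
        rw [← Measure.prod_prod, ← Measure.prod_prod]; exact measure_union_le _ _

theorem IsRDESolution.ae_mem_Icc {μ : Measure ℝ} (hμ : IsRDESolution μ) :
    ∀ᵐ x ∂μ, x ∈ Icc (0 : ℝ) 1 := by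
  have := hμ.1
  have h := measure_pos_eq_zero_of_tail_le_double measurable_distUnitInterval
    fun t _ => hμ.measure_tail_le_double t
  simpa [ae_iff, distUnitInterval_pos_iff] using h

theorem IsRDESolution.integrable_pow {μ : Measure ℝ} (hμ : IsRDESolution μ) (i : ℕ) :
    Integrable (fun x : ℝ => x ^ i) μ := by
  have := hμ.1
  refine (integrable_const (1 : ℝ)).mono' (by fun_prop) ?_
  filter_upwards [hμ.ae_mem_Icc] with x hx
  rw [Real.norm_eq_abs, abs_pow]
  exact pow_le_one₀ (abs_nonneg x) (abs_le.2 ⟨by linarith [hx.1], hx.2⟩)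

theorem rdeMap_pow (q : ℝ × ℝ) (k : ℕ) :
    rdeMap q ^ k = ∑ i ∈ Finset.range (k + 1),
      k.choose i * (q.1 ^ i * (Real.sqrt q.2 ^ k * (1 - Real.sqrt q.2) ^ (k - i))) := by
  rw [rdeMap, add_pow]
  refine Finset.sum_congr rfl fun i hi => ?_
  rw [mul_pow, mul_pow, ← pow_mul_pow_sub (Real.sqrt q.2) (Finset.mem_range_succ_iff.1 hi)]
  ring

theorem IsRDESolution.integral_pow_eq_sum {μ : Measure ℝ} (hμ : IsRDESolution μ) (k : ℕ) :
    ∫ x, x ^ k ∂μ = ∑ i ∈ Finset.range (k + 1),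
      k.choose i * (∫ x, x ^ i ∂μ) * (2 * (k + 1)! * (k - i)! / (k + (k - i) + 2)!) := by
  have := hμ.1
  have hint : ∀ i, Integrable (fun p : ℝ × ℝ =>
      p.1 ^ i * (Real.sqrt p.2 ^ k * (1 - Real.sqrt p.2) ^ (k - i))) (μ.prod unif) := fun i =>
    (hμ.integrable_pow i).mul_prod (g := fun u => Real.sqrt u ^ k * (1 - Real.sqrt u) ^ (k - i))
      (Continuous.integrableOn_Icc (by fun_prop))
  calc ∫ x, x ^ k ∂μ = ∫ p, rdeMap p ^ k ∂(μ.prod unif) := by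
        conv_lhs => rw [← hμ.2]
        exact integral_map continuous_rdeMap.measurable.aemeasurable (by fun_prop)
    _ = ∑ i ∈ Finset.range (k + 1), k.choose i * ∫ p, p.1 ^ i *
          (Real.sqrt p.2 ^ k * (1 - Real.sqrt p.2) ^ (k - i)) ∂(μ.prod unif) := by
        simp_rw [rdeMap_pow]
        rw [integral_finsetSum _ fun i _ => (hint i).const_mul _]
        simp_rw [integral_const_mul]
    _ = _ := by
        refine Finset.sum_congr rfl fun i _ => ?_
        rw [integral_prod_mul (fun x => x ^ i)
          (fun u => Real.sqrt u ^ k * (1 - Real.sqrt u) ^ (k - i)),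
          integral_unif_sqrt_pow_mul_one_sub_sqrt_pow]
        ring

theorem binomial_moment_coeff_eq {k i : ℕ} (hi : i < k) :
    ((k + 2 : ℝ) / k) * (k.choose i * (2 * (k + 1)! * (k - i)! / (k + (k - i) + 2)!)) =
      2 * (k + 2)! * (k - 1)! / ((2 * k - i + 2)! * i !) := by
  rw [Nat.cast_choose ℝ hi.le, show k + (k - i) + 2 = 2 * k - i + 2 by omega,
    Nat.factorial_succ (k + 1), ← Nat.mul_factorial_pred (n := k) (by omega)]
  have : (k : ℝ) ≠ 0 := by norm_cast; omega
  push_cast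
  field_simp
  ring

theorem moment_recursion_of_binomial_expansion (m : ℕ → ℝ) {k : ℕ} (hk : 1 ≤ k)
    (h : m k = ∑ i ∈ Finset.range (k + 1),
      k.choose i * m i * (2 * (k + 1)! * (k - i)! / (k + (k - i) + 2)!)) :
    m k = 2 * (k + 2)! * (k - 1)! * ∑ i ∈ Finset.range k, m i / ((2 * k - i + 2)! * i !) := by
  have hk₀ : (k : ℝ) ≠ 0 := by norm_cast; omega
  have hlast : (2 * (k + 1)! * (k - k)! / (k + (k - k) + 2)! : ℝ) = 2 / (k + 2) := by
    rw [Nat.sub_self, Nat.factorial_zero, add_zero, Nat.factorial_succ (k + 1)]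
    push_cast
    field_simp
    ring
  rw [Finset.sum_range_succ, Nat.choose_self, hlast, Nat.cast_one, one_mul] at h
  set S := ∑ i ∈ Finset.range k,
    k.choose i * m i * (2 * (k + 1)! * (k - i)! / (k + (k - i) + 2)! : ℝ)
  have hsolve : m k = (k + 2) / k * S := by
    field_simp at h ⊢
    linarith
  rw [hsolve, Finset.mul_sum, Finset.mul_sum]
  refine Finset.sum_congr rfl fun i hi => ?_
  linear_combination m i * binomial_moment_coeff_eq (Finset.mem_range.1 hi)

/-- Moment recursion for the solution `X` of the RDE `X =_d √U·X + √U·(1 − √U)`: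
`E[X^k] = 2·(k+2)!·(k−1)!·Σ_{i=0}^{k−1} E[X^i]/((2k−i+2)!·i!)` for `k ≥ 1`; in particular
`E[X] = 1/2`, `E[X²] = 4/15` and `Var(X) = 1/60`. -/
theorem rde_moments (μ : Measure ℝ) (hμ : IsRDESolution μ) :
    (∀ k : ℕ, 1 ≤ k →
      ∫ x, x ^ k ∂ μ =
        2 * ((k + 2).factorial : ℝ) * ((k - 1).factorial : ℝ) *
          ∑ i ∈ Finset.range k,
            (∫ x, x ^ i ∂ μ) / (((2 * k - i + 2).factorial : ℝ) * (i.factorial : ℝ))) ∧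
    (∫ x, x ∂ μ) = 1 / 2 ∧
    (∫ x, x ^ 2 ∂ μ) = 4 / 15 ∧
    (∫ x, x ^ 2 ∂ μ) - (∫ x, x ∂ μ) ^ 2 = 1 / 60 := by
  have := hμ.1
  have hrec : ∀ k, 1 ≤ k → _ := fun k hk =>
    moment_recursion_of_binomial_expansion (fun i => ∫ x, x ^ i ∂μ) hk (hμ.integral_pow_eq_sum k)
  have h₁ : ∫ x, x ∂μ = 1 / 2 := by
    have h := hrec 1 le_rfl
    norm_num [Nat.factorial] at h
    exact h
  have h₂ : ∫ x, x ^ 2 ∂μ = 4 / 15 := by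
    have h := hrec 2 one_le_two
    norm_num [Finset.sum_range_succ, Nat.factorial, h₁] at h
    exact h
  exact ⟨hrec, h₁, h₂, by rw [h₁, h₂]; norm_num⟩
end
end

section
/- Let X be the solution of the recursive distributional equation X =_d √U·X + √U·(1−√U), and let f be the version of its Lebesgue density satisfying the integral equation f(t) = 2·∫_{2√t−1}^{t} g(x,t)·f(x) dx + ∫_{t}^{1} (g(x,t) − 1)·f(x) dx for all t ∈ [0,1] and f = 0 outside [0,1], where g(x,t) := (1+x)/√((1+x)² − 4t). Then f(0) = 0, f(1) = 0, and f is strictly increasing on [0, 1/4]. -/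
open MeasureTheory

noncomputable section

/-- The function `g(x,t) = (1+x)/√((1+x)² − 4t)`. -/
def gdens (x t : ℝ) : ℝ := (1 + x) / Real.sqrt ((1 + x) ^ 2 - 4 * t)

/-- `f` is the version of the Lebesgue density of `μ` which vanishes outside `[0,1]` and
satisfies the integral equation
`f(t) = 2·∫_{2√t−1}^{t} g(x,t)·f(x) dx + ∫_{t}^{1} (g(x,t) − 1)·f(x) dx` on `[0,1]`. -/
def IsRDEDensity (μ : Measure ℝ) (f : ℝ → ℝ) : Prop :=
  Measurable f ∧ (∀ t, 0 ≤ f t) ∧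
  μ = volume.withDensity (fun t => ENNReal.ofReal (f t)) ∧
  (∀ t : ℝ, t < 0 ∨ 1 < t → f t = 0) ∧
  ∀ t ∈ Set.Icc (0 : ℝ) 1,
    f t = 2 * (∫ x in (2 * Real.sqrt t - 1)..t, gdens x t * f x)
          + ∫ x in t..(1 : ℝ), (gdens x t - 1) * f x

/-!
Split the integral equation at `x = t`: it reads `f t = ∫₀¹ K(x, t) f(x) dx` with
`K(x, t) = 2 g(x, t)` for `x ≤ t` and `K(x, t) = g(x, t) - 1` for `x > t`. For fixed `x > 0` the
kernel is strictly increasing in `t ∈ [0, 1/4]`: `g(x, ·)` is, and at the jump `t = x` it moves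
from `g - 1` up to `2 g`. Hence `f t - f s = ∫₀¹ (K(x, t) - K(x, s)) f(x) dx > 0` for `s < t`,
since `f` is a probability density on `(0, 1]`.

The representation needs `g(·, t) f` to be integrable, which is not automatic as `g(x, 1/4)` blows
up like `1/√x` at `0`. For `t ≤ 1/8` the kernel is bounded by `4`, so the equation itself gives
`f ≤ 4` on `[0, 1/8]`, and then `g(x, t) f(x) ≤ 8/√x + 6 f(x)` for all `t ≤ 1/4`.
-/

open Set

lemma measurable_gdens (t : ℝ) : Measurable fun x => gdens x t := by
  unfold gdens; fun_prop

lemma gdens_nonneg {x t : ℝ} (hx : -1 ≤ x) : 0 ≤ gdens x t :=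
  div_nonneg (by linarith) (Real.sqrt_nonneg _)

lemma gdens_zero_right {x : ℝ} (hx : -1 < x) : gdens x 0 = 1 := by
  rw [gdens, mul_zero, sub_zero, Real.sqrt_sq (by linarith), div_self (by linarith)]

lemma strictMonoOn_gdens {x : ℝ} (hx : 0 < x) : StrictMonoOn (gdens x) (Iic (1 / 4)) := by
  intro s _ t ht hst
  have hpos : 0 < (1 + x) ^ 2 - 4 * t := by nlinarith [mem_Iic.1 ht]
  exact div_lt_div_of_pos_left (by linarith) (Real.sqrt_pos.2 hpos)
    (Real.sqrt_lt_sqrt hpos.le (by linarith))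

lemma gdens_le_two_div_sqrt {x t : ℝ} (hx : 0 < x) (hx1 : x ≤ 1) (ht : t ≤ 1 / 4) :
    gdens x t ≤ 2 / √x :=
  div_le_div₀ zero_le_two (by linarith) (Real.sqrt_pos.2 hx) (Real.sqrt_le_sqrt (by nlinarith))

lemma gdens_le_two {x t : ℝ} (hx : 0 ≤ x) (ht : t ≤ 1 / 8) : gdens x t ≤ 2 := by
  have h : (1 + x) / 2 ≤ √((1 + x) ^ 2 - 4 * t) := Real.le_sqrt_of_sq_le (by nlinarith)
  exact div_le_of_le_mul₀ (Real.sqrt_nonneg _) zero_le_two (by linarith)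

def rdeKernel (x t : ℝ) : ℝ := if x ≤ t then 2 * gdens x t else gdens x t - 1

lemma measurable_rdeKernel (t : ℝ) : Measurable fun x => rdeKernel x t :=
  Measurable.ite measurableSet_Iic ((measurable_gdens t).const_mul 2)
    ((measurable_gdens t).sub_const 1)

lemma abs_rdeKernel_le {x t : ℝ} (hx : 0 ≤ x) : |rdeKernel x t| ≤ 2 * gdens x t + 1 := by
  have hg := gdens_nonneg (t := t) (by linarith : -1 ≤ x)
  unfold rdeKernel
  split_ifs <;> rw [abs_le] <;> constructor <;> linarith

lemma rdeKernel_le_four {x t : ℝ} (hx : 0 ≤ x) (ht : t ≤ 1 / 8) : rdeKernel x t ≤ 4 := by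
  have hg := gdens_le_two hx ht
  unfold rdeKernel
  split_ifs <;> linarith

lemma rdeKernel_lt_rdeKernel {x s t : ℝ} (hx : 0 < x) (hst : s < t) (ht : t ≤ 1 / 4) :
    rdeKernel x s < rdeKernel x t := by
  have hlt := strictMonoOn_gdens hx (mem_Iic.2 (hst.le.trans ht)) (mem_Iic.2 ht) hst
  have hg := gdens_nonneg (t := t) (by linarith : -1 ≤ x)
  unfold rdeKernel
  split_ifs <;> linarith

lemma setIntegral_mul_pos {α : Type*} [MeasurableSpace α] {μ : Measure α} {s : Set α}
    {φ f : α → ℝ} (hs : MeasurableSet s) (hφ : ∀ x ∈ s, 0 < φ x)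
    (hf : ∀ x ∈ s, 0 ≤ f x) (hfi : IntegrableOn f s μ)
    (hφfi : IntegrableOn (fun x => φ x * f x) s μ)
    (hpos : 0 < ∫ x in s, f x ∂μ) : 0 < ∫ x in s, φ x * f x ∂μ := by
  rw [setIntegral_pos_iff_support_of_nonneg_ae ((ae_restrict_iff' hs).2 (ae_of_all _ hf)) hfi]
    at hpos
  rw [setIntegral_pos_iff_support_of_nonneg_ae ((ae_restrict_iff' hs).2
    (ae_of_all _ fun x hx => mul_nonneg (hφ x hx).le (hf x hx))) hφfi]
  convert hpos using 2
  ext x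
  simp +contextual [(hφ x _).ne']

namespace IsRDEDensity

variable {μ : Measure ℝ} {f : ℝ → ℝ} {t : ℝ}

lemma integrable [IsFiniteMeasure μ] (hf : IsRDEDensity μ f) : Integrable f := by
  obtain ⟨hfm, hf0, rfl, -⟩ := hf
  refine ⟨hfm.aestronglyMeasurable, (hasFiniteIntegral_iff_ofReal (ae_of_all _ hf0)).2 ?_⟩
  simpa using measure_lt_top (volume.withDensity fun t => ENNReal.ofReal (f t)) univ

lemma integral_eq_one [IsProbabilityMeasure μ] (hf : IsRDEDensity μ f) : ∫ x, f x = 1 := by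
  have h := ofReal_integral_eq_lintegral_ofReal hf.integrable (ae_of_all _ hf.2.1)
  obtain ⟨-, -, rfl, -⟩ := hf
  rw [← setLIntegral_univ, ← withDensity_apply _ MeasurableSet.univ, measure_univ] at h
  exact (ENNReal.ofReal_eq_one).1 h

lemma apply_eq_setIntegral (hf : IsRDEDensity μ f) (ht0 : 0 ≤ t) (ht : t ≤ 1 / 4) :
    f t = 2 * (∫ x in Ioc 0 t, gdens x t * f x) + ∫ x in Ioc t 1, (gdens x t - 1) * f x := by
  obtain ⟨-, -, -, hvan, heq⟩ := hf
  have hsqrt : 2 * √t - 1 ≤ 0 := by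
    have : √t ≤ 1 / 2 := Real.sqrt_le_left (by norm_num) |>.2 (by linarith)
    linarith
  have hleft :
      ∫ x in Ioc (2 * √t - 1) t, gdens x t * f x = ∫ x in Ioc 0 t, gdens x t * f x := by
    refine setIntegral_eq_of_subset_of_ae_sdiff_eq_zero nullMeasurableSet_Ioc
      (Ioc_subset_Ioc_left hsqrt) ?_
    filter_upwards [volume.ae_ne (0 : ℝ)] with x hx0 hx
    have hx_nonpos : x ≤ 0 := by
      by_contra! hpos
      exact hx.2 ⟨hpos, hx.1.2⟩
    rw [hvan x (Or.inl (lt_of_le_of_ne hx_nonpos hx0)), mul_zero]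
  rw [heq t ⟨ht0, by linarith⟩, intervalIntegral.integral_of_le (by linarith),
    intervalIntegral.integral_of_le (by linarith), hleft]

lemma apply_zero (hf : IsRDEDensity μ f) : f 0 = 0 := by
  rw [hf.apply_eq_setIntegral le_rfl (by norm_num), Ioc_self, setIntegral_empty, mul_zero,
    zero_add]
  exact setIntegral_eq_zero_of_forall_eq_zero fun x hx => by
    rw [gdens_zero_right (by linarith [hx.1]), sub_self, zero_mul]

lemma apply_one (hf : IsRDEDensity μ f) : f 1 = 0 := by
  obtain ⟨-, -, -, -, heq⟩ := hf
  norm_num [heq 1 (right_mem_Icc.2 zero_le_one)]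

lemma setIntegral_Ioc_zero_one_eq_one [IsProbabilityMeasure μ] (hf : IsRDEDensity μ f) :
    ∫ x in Ioc 0 1, f x = 1 := by
  rw [setIntegral_eq_integral_of_forall_compl_eq_zero, hf.integral_eq_one]
  intro x hx
  rcases le_or_gt x 0 with hx0 | hx0
  · rcases hx0.lt_or_eq with hneg | rfl
    · exact hf.2.2.2.1 x (Or.inl hneg)
    · exact hf.apply_zero
  · exact hf.2.2.2.1 x (Or.inr (not_le.1 fun hx1 => hx ⟨hx0, hx1⟩))

lemma integrableOn_rdeKernel_mul [IsFiniteMeasure μ] (hf : IsRDEDensity μ f)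
    (hg : IntegrableOn (fun x => gdens x t * f x) (Ioc 0 1)) :
    IntegrableOn (fun x => rdeKernel x t * f x) (Ioc 0 1) := by
  refine ((hg.const_mul 2).add hf.integrable.integrableOn).mono'
    ((measurable_rdeKernel t).mul hf.1).aestronglyMeasurable
    ((ae_restrict_iff' measurableSet_Ioc).2 (ae_of_all _ fun x hx => ?_))
  rw [norm_mul, Real.norm_eq_abs, Real.norm_of_nonneg (hf.2.1 x)]
  calc |rdeKernel x t| * f x ≤ (2 * gdens x t + 1) * f x :=
        mul_le_mul_of_nonneg_right (abs_rdeKernel_le hx.1.le) (hf.2.1 x)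
    _ = 2 * (gdens x t * f x) + f x := by ring

lemma eq_setIntegral_rdeKernel_mul [IsFiniteMeasure μ] (hf : IsRDEDensity μ f) (ht0 : 0 ≤ t)
    (ht : t ≤ 1 / 4) (hg : IntegrableOn (fun x => gdens x t * f x) (Ioc 0 1)) :
    f t = ∫ x in Ioc 0 1, rdeKernel x t * f x := by
  have hK := hf.integrableOn_rdeKernel_mul hg
  have ht1 : t ≤ 1 := by linarith
  rw [hf.apply_eq_setIntegral ht0 ht, ← Ioc_union_Ioc_eq_Ioc ht0 ht1,
    setIntegral_union (Ioc_disjoint_Ioc_of_le le_rfl) measurableSet_Ioc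
      (hK.mono_set (Ioc_subset_Ioc_right ht1)) (hK.mono_set (Ioc_subset_Ioc_left ht0)),
    ← integral_const_mul]
  congr 1 <;> refine setIntegral_congr_fun measurableSet_Ioc fun x hx => ?_
  · simp only [rdeKernel, if_pos hx.2]
    ring
  · simp only [rdeKernel, if_neg (not_le.2 hx.1)]

lemma integrableOn_gdens_mul_of_le_one_eighth [IsFiniteMeasure μ] (hf : IsRDEDensity μ f)
    (ht : t ≤ 1 / 8) : IntegrableOn (fun x => gdens x t * f x) (Ioc 0 1) := by
  refine (hf.integrable.integrableOn.const_mul 2).mono'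
    ((measurable_gdens t).mul hf.1).aestronglyMeasurable
    ((ae_restrict_iff' measurableSet_Ioc).2 (ae_of_all _ fun x hx => ?_))
  rw [Real.norm_of_nonneg (mul_nonneg (gdens_nonneg (by linarith [hx.1])) (hf.2.1 x))]
  exact mul_le_mul_of_nonneg_right (gdens_le_two hx.1.le ht) (hf.2.1 x)

lemma le_four [IsProbabilityMeasure μ] (hf : IsRDEDensity μ f) (ht0 : 0 ≤ t)
    (ht : t ≤ 1 / 8) : f t ≤ 4 := by
  have hg := hf.integrableOn_gdens_mul_of_le_one_eighth ht
  rw [hf.eq_setIntegral_rdeKernel_mul ht0 (by linarith) hg]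
  calc ∫ x in Ioc 0 1, rdeKernel x t * f x ≤ ∫ x in Ioc (0 : ℝ) 1, 4 * f x :=
        setIntegral_mono_on (hf.integrableOn_rdeKernel_mul hg)
          (hf.integrable.integrableOn.const_mul 4) measurableSet_Ioc fun x hx =>
          mul_le_mul_of_nonneg_right (rdeKernel_le_four hx.1.le ht) (hf.2.1 x)
    _ = 4 := by rw [integral_const_mul, hf.setIntegral_Ioc_zero_one_eq_one, mul_one]

lemma integrableOn_gdens_mul [IsProbabilityMeasure μ] (hf : IsRDEDensity μ f) (ht : t ≤ 1 / 4) :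
    IntegrableOn (fun x => gdens x t * f x) (Ioc 0 1) := by
  have hsing : IntegrableOn (fun x : ℝ => (√x)⁻¹) (Ioc 0 1) := by
    have h := intervalIntegral.intervalIntegrable_rpow' (a := 0) (b := 1) (r := -(1 / 2))
      (by norm_num)
    rw [intervalIntegrable_iff_integrableOn_Ioc_of_le zero_le_one] at h
    refine h.congr_fun (fun x hx => ?_) measurableSet_Ioc
    simp only [Real.rpow_neg hx.1.le, Real.sqrt_eq_rpow]
  refine ((hsing.const_mul 8).add (hf.integrable.integrableOn.const_mul 6)).mono'
    ((measurable_gdens t).mul hf.1).aestronglyMeasurable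
    ((ae_restrict_iff' measurableSet_Ioc).2 (ae_of_all _ fun x hx => ?_))
  have hfx := hf.2.1 x
  have hsqrt := Real.sqrt_pos.2 hx.1
  have hinv := inv_nonneg.2 hsqrt.le
  have hg : gdens x t ≤ 2 * (√x)⁻¹ :=
    (gdens_le_two_div_sqrt hx.1 hx.2 ht).trans_eq (div_eq_mul_inv _ _)
  rw [Real.norm_of_nonneg (mul_nonneg (gdens_nonneg (by linarith [hx.1])) hfx)]
  rcases le_or_gt x (1 / 8) with hx8 | hx8
  · calc gdens x t * f x ≤ 2 * (√x)⁻¹ * 4 :=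
          mul_le_mul hg (hf.le_four hx.1.le hx8) hfx (by positivity)
      _ ≤ 8 * (√x)⁻¹ + 6 * f x := by linarith
  · have h3 : (√x)⁻¹ ≤ 3 := by
      rw [inv_le_comm₀ hsqrt (by norm_num)]
      exact Real.le_sqrt_of_sq_le (by norm_num; linarith)
    calc gdens x t * f x ≤ 6 * f x := mul_le_mul_of_nonneg_right (by linarith) hfx
      _ ≤ 8 * (√x)⁻¹ + 6 * f x := by linarith

lemma strictMonoOn [IsProbabilityMeasure μ] (hf : IsRDEDensity μ f) :
    StrictMonoOn f (Icc 0 (1 / 4)) := by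
  intro s hs t ht hst
  have hK : ∀ u ∈ Icc (0 : ℝ) (1 / 4),
      IntegrableOn (fun x => rdeKernel x u * f x) (Ioc 0 1) :=
    fun u hu => hf.integrableOn_rdeKernel_mul (hf.integrableOn_gdens_mul hu.2)
  have hrep : ∀ u ∈ Icc (0 : ℝ) (1 / 4), f u = ∫ x in Ioc 0 1, rdeKernel x u * f x :=
    fun u hu => hf.eq_setIntegral_rdeKernel_mul hu.1 hu.2 (hf.integrableOn_gdens_mul hu.2)
  have hdiff : f t - f s = ∫ x in Ioc 0 1, (rdeKernel x t - rdeKernel x s) * f x := by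
    rw [hrep t ht, hrep s hs, ← integral_sub (hK t ht) (hK s hs)]
    simp_rw [sub_mul]
  rw [← sub_pos, hdiff]
  exact setIntegral_mul_pos measurableSet_Ioc
    (fun x hx => sub_pos.2 (rdeKernel_lt_rdeKernel hx.1 hst ht.2)) (fun x _ => hf.2.1 x)
    hf.integrable.integrableOn
    (((hK t ht).sub (hK s hs)).congr_fun (fun x _ => (sub_mul _ _ _).symm) measurableSet_Ioc)
    (hf.setIntegral_Ioc_zero_one_eq_one.symm ▸ one_pos)

end IsRDEDensity

/-- The version `f` of the density of the RDE solution satisfying the integral equation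
satisfies `f(0) = 0`, `f(1) = 0`, and is strictly increasing on `[0, 1/4]`. -/
theorem rde_density_monotone (μ : Measure ℝ) (hμ : IsRDESolution μ)
    (f : ℝ → ℝ) (hf : IsRDEDensity μ f) :
    f 0 = 0 ∧ f 1 = 0 ∧ StrictMonoOn f (Set.Icc (0 : ℝ) (1 / 4)) := by
  have := hμ.1
  exact ⟨hf.apply_zero, hf.apply_one, hf.strictMonoOn⟩
end
end
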